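/- Let $\mathcal{M}$ be the parabolic Hardy–Littlewood maximal operator on $\mathbb{R}^{N+1}$. If $u$ is locally integrable, $(x_1,t_1)$ is a point with $\mathcal{M}(u)(x_1,t_1)\le\lambda$, and $(x_1,t_1)$ belongs to the cylinder $\tilde{Q}_r(x,t)$, then for every $(y,t')\in \tilde{Q}_r(x,t)$ one has $\mathcal{M}(u)(y,t')\le\max\{\mathcal{M}(\chi_{\tilde{Q}_{2r}(x,t)}u)(y,t'),\,3^{N+2}\lambda\}$. -/

import Mathlib

open MeasureTheory Set ENNReal

noncomputable section

abbrev ESp (N : ℕ) := EuclideanSpace ℝ (Fin N) × ℝ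

def tQ (N : ℕ) (ρ : ℝ) (z : ESp N) : Set (ESp N) :=
  (Metric.ball z.1 ρ) ×ˢ (Set.Ioo (z.2 - ρ ^ 2 / 2) (z.2 + ρ ^ 2 / 2))

/-- The parabolic Hardy–Littlewood maximal function. -/
def pM (N : ℕ) (f : ESp N → ℝ) (z : ESp N) : ℝ≥0∞ :=
  ⨆ (ρ : ℝ) (_ : 0 < ρ),
    (∫⁻ y in tQ N ρ z, ENNReal.ofReal |f y|) / volume (tQ N ρ z)

/-!
Fix a radius `ρ`. If `ρ ≤ r`, the cylinder `Q̃_ρ(y,t')` lies in `Q̃_{2r}(x,t)`, so the average of `u`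
over it is also an average of `χ_{Q̃_{2r}} u`. If `ρ > r`, then `Q̃_ρ(y,t')` lies in `Q̃_{3ρ}(x₁,t₁)`,
whose volume is `3^{N+2}` times larger, and the average of `u` over the latter is at most `λ`.
-/

lemma measurableSet_tQ (N : ℕ) (ρ : ℝ) (z : ESp N) : MeasurableSet (tQ N ρ z) :=
  Metric.isOpen_ball.measurableSet.prod measurableSet_Ioo

lemma volume_tQ (N : ℕ) {ρ : ℝ} (hρ : 0 < ρ) (z : ESp N) :
    volume (tQ N ρ z) =
      ENNReal.ofReal (ρ ^ (N + 2)) * volume (Metric.ball (0 : EuclideanSpace ℝ (Fin N)) 1) := by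
  rw [tQ, Measure.volume_eq_prod, Measure.prod_prod, Real.volume_Ioo,
    Measure.addHaar_ball_of_pos volume _ hρ, finrank_euclideanSpace_fin, mul_right_comm,
    ← ENNReal.ofReal_mul (by positivity)]
  ring_nf

lemma volume_tQ_ne_zero (N : ℕ) {ρ : ℝ} (hρ : 0 < ρ) (z : ESp N) : volume (tQ N ρ z) ≠ 0 := by
  rw [volume_tQ N hρ]
  exact mul_ne_zero (ENNReal.ofReal_pos.mpr (by positivity)).ne'
    (Metric.measure_ball_pos volume 0 one_pos).ne'

lemma volume_tQ_ne_top (N : ℕ) {ρ : ℝ} (hρ : 0 < ρ) (z : ESp N) : volume (tQ N ρ z) ≠ ∞ := by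
  rw [volume_tQ N hρ]
  exact ENNReal.mul_ne_top ENNReal.ofReal_ne_top measure_ball_lt_top.ne

lemma volume_tQ_mul (N : ℕ) {c ρ : ℝ} (hc : 0 < c) (hρ : 0 < ρ) (z w : ESp N) :
    volume (tQ N (c * ρ) z) = ENNReal.ofReal (c ^ (N + 2)) * volume (tQ N ρ w) := by
  rw [volume_tQ N (mul_pos hc hρ), volume_tQ N hρ, mul_pow, ENNReal.ofReal_mul (by positivity),
    mul_assoc]

lemma mem_tQ_comm {N : ℕ} {r : ℝ} {y z : ESp N} : y ∈ tQ N r z ↔ z ∈ tQ N r y := by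
  simp only [tQ, mem_prod, Metric.mem_ball, mem_Ioo, dist_comm y.1]
  constructor <;> rintro ⟨h, h₁, h₂⟩ <;> exact ⟨h, by linarith, by linarith⟩

lemma pos_of_mem_tQ {N : ℕ} {r : ℝ} {y z : ESp N} (hy : y ∈ tQ N r z) : 0 < r :=
  dist_nonneg.trans_lt hy.1

lemma tQ_mono (N : ℕ) {ρ ρ' : ℝ} (hρ : 0 ≤ ρ) (hρρ' : ρ ≤ ρ') (z : ESp N) :
    tQ N ρ z ⊆ tQ N ρ' z := by
  have : ρ ^ 2 ≤ ρ' ^ 2 := pow_le_pow_left₀ hρ hρρ' 2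
  refine prod_mono (Metric.ball_subset_ball hρρ') (Ioo_subset_Ioo ?_ ?_) <;> linarith

lemma tQ_subset_tQ_add {N : ℕ} {ρ r : ℝ} {y z : ESp N} (hρ : 0 ≤ ρ) (hy : y ∈ tQ N r z) :
    tQ N ρ y ⊆ tQ N (ρ + r) z := by
  have hr := pos_of_mem_tQ hy
  rintro p ⟨hp₁, hp₂⟩
  obtain ⟨hy₁, hy₂⟩ := hy
  simp only [Metric.mem_ball, mem_Ioo] at hp₁ hp₂ hy₁ hy₂
  -- in time: `ρ² / 2 + r² / 2 ≤ (ρ + r)² / 2`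
  refine ⟨(dist_triangle _ _ _).trans_lt (add_lt_add hp₁ hy₁), ?_, ?_⟩ <;> nlinarith

lemma le_pM (N : ℕ) (f : ESp N → ℝ) {ρ : ℝ} (hρ : 0 < ρ) (z : ESp N) :
    (∫⁻ y in tQ N ρ z, ENNReal.ofReal |f y|) / volume (tQ N ρ z) ≤ pM N f z :=
  le_iSup₂ (f := fun ρ (_ : 0 < ρ) =>
    (∫⁻ y in tQ N ρ z, ENNReal.ofReal |f y|) / volume (tQ N ρ z)) ρ hρ

lemma setLIntegral_tQ_le_of_pM_le {N : ℕ} {f : ESp N → ℝ} {z : ESp N} {c : ℝ≥0∞}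
    (hf : pM N f z ≤ c) {ρ : ℝ} (hρ : 0 < ρ) :
    ∫⁻ y in tQ N ρ z, ENNReal.ofReal |f y| ≤ c * volume (tQ N ρ z) :=
  (ENNReal.div_le_iff (volume_tQ_ne_zero N hρ z) (volume_tQ_ne_top N hρ z)).mp
    ((le_pM N f hρ z).trans hf)

theorem stmt4_general (N : ℕ) (u : ESp N → ℝ) (lam : ℝ)
    (r : ℝ) (z z₁ : ESp N) (hz₁ : z₁ ∈ tQ N r z)
    (hM : pM N u z₁ ≤ ENNReal.ofReal lam) :
    ∀ y ∈ tQ N r z,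
      pM N u y ≤
        max (pM N ((tQ N (2 * r) z).indicator u) y)
          (ENNReal.ofReal (3 ^ (N + 2) * lam)) := by
  intro y hy
  refine iSup₂_le fun ρ hρ => ?_
  rcases le_or_gt ρ r with hρr | hρr
  · have hsub : tQ N ρ y ⊆ tQ N (2 * r) z :=
      (tQ_subset_tQ_add hρ.le hy).trans (tQ_mono N (by linarith) (by linarith) z)
    have hint : ∫⁻ w in tQ N ρ y, ENNReal.ofReal |u w| =
        ∫⁻ w in tQ N ρ y, ENNReal.ofReal |(tQ N (2 * r) z).indicator u w| :=
      setLIntegral_congr_fun (measurableSet_tQ N ρ y) fun w hw => by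
        rw [indicator_of_mem (hsub hw)]
    rw [hint]
    exact (le_pM N _ hρ y).trans (le_max_left _ _)
  · have h3ρ : 0 < 3 * ρ := by linarith
    have hr := pos_of_mem_tQ hy
    have hsub : tQ N ρ y ⊆ tQ N (3 * ρ) z₁ :=
      calc tQ N ρ y ⊆ tQ N (ρ + r) z := tQ_subset_tQ_add hρ.le hy
        _ ⊆ tQ N (ρ + r + r) z₁ := tQ_subset_tQ_add (by linarith) (mem_tQ_comm.mp hz₁)
        _ ⊆ tQ N (3 * ρ) z₁ := tQ_mono N (by linarith) (by linarith) z₁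
    refine le_max_of_le_right ((ENNReal.div_le_iff (volume_tQ_ne_zero N hρ y)
      (volume_tQ_ne_top N hρ y)).mpr ?_)
    calc ∫⁻ w in tQ N ρ y, ENNReal.ofReal |u w|
        ≤ ∫⁻ w in tQ N (3 * ρ) z₁, ENNReal.ofReal |u w| := lintegral_mono_set hsub
      _ ≤ ENNReal.ofReal lam * volume (tQ N (3 * ρ) z₁) := setLIntegral_tQ_le_of_pM_le hM h3ρ
      _ = ENNReal.ofReal (3 ^ (N + 2) * lam) * volume (tQ N ρ y) := by
        rw [volume_tQ_mul N (by norm_num) hρ z₁ y, ENNReal.ofReal_mul (by positivity)]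
        ring

theorem stmt4 (N : ℕ) (u : ESp N → ℝ) (hu : LocallyIntegrable u volume)
    (hupos : ∀ z, 0 ≤ u z) (lam : ℝ) (hlam : 0 < lam)
    (r : ℝ) (hr : 0 < r) (z z₁ : ESp N) (hz₁ : z₁ ∈ tQ N r z)
    (hM : pM N u z₁ ≤ ENNReal.ofReal lam) :
    ∀ y ∈ tQ N r z,
      pM N u y ≤
        max (pM N ((tQ N (2 * r) z).indicator u) y)
          (ENNReal.ofReal (3 ^ (N + 2) * lam)) :=
  stmt4_general N u lam r z z₁ hz₁ hM
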